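/- For every z ∈ ℂ^{n+1} with H_ε(z) ≠ 0 and every v ∈ ℂ^{n+1}, one has (Dα_ε(z)[X(z)])(v) − (Dα_ε(z)[v])(X(z)) = −D(H_ε^{−1}·Δ_ε)(z)(v); that is, the contraction of the exterior derivative of the 1-form α_ε with the vector field X equals minus the differential of the function H_ε^{−1}·Δ_ε. -/

import Mathlib

open Complex

/-- The index `2(j+1)` in `Fin (2m+2)`, for `j : Fin m`. -/
def idxA (m : ℕ) (j : Fin m) : Fin (2 * m + 2) := ⟨2 * j.val + 2, by have := j.isLt; omega⟩

/-- The index `2(j+1)+1` in `Fin (2m+2)`, for `j : Fin m`. -/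
def idxB (m : ℕ) (j : Fin m) : Fin (2 * m + 2) := ⟨2 * j.val + 3, by have := j.isLt; omega⟩

/-- `Δ_ε(z) = ∑_{j=1}^m ε_j(|z_{2j}|² − |z_{2j+1}|²)`. -/
noncomputable def DeltaEps (m : ℕ) (ε : Fin m → ℝ) (z : Fin (2 * m + 2) → ℂ) : ℝ :=
  ∑ j : Fin m, ε j * (‖z (idxA m j)‖ ^ 2 - ‖z (idxB m j)‖ ^ 2)

/-- `H_ε(z) = ∑_k |z_k|² + Δ_ε(z)`. -/
noncomputable def HepsN (m : ℕ) (ε : Fin m → ℝ) (z : Fin (2 * m + 2) → ℂ) : ℝ :=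
  ∑ k, ‖z k‖ ^ 2 + DeltaEps m ε z

/-- The vector field `X` on `ℂ^{n+1}` (`n = 2m+1`): `X(z)₀ = X(z)₁ = 0`,
`X(z)_{2j} = i·ε_j·z_{2j}`, `X(z)_{2j+1} = −i·ε_j·z_{2j+1}`. -/
noncomputable def Xvf (m : ℕ) (ε : Fin m → ℝ) (z : Fin (2 * m + 2) → ℂ) :
    Fin (2 * m + 2) → ℂ := fun k =>
  if h : k.val ≤ 1 then 0
  else if k.val % 2 = 0 then
    Complex.I * ((ε ⟨k.val / 2 - 1, by have := k.isLt; omega⟩ : ℝ) : ℂ) * z k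
  else
    -(Complex.I * ((ε ⟨k.val / 2 - 1, by have := k.isLt; omega⟩ : ℝ) : ℂ) * z k)

/-- The `1`-form `α_ε(z)(v) = H_ε(z)⁻¹·∑_k Im(conj(z_k)·v_k)`. -/
noncomputable def alphaN (m : ℕ) (ε : Fin m → ℝ) (z v : Fin (2 * m + 2) → ℂ) : ℝ :=
  (HepsN m ε z)⁻¹ * ∑ k, ((starRingEnd ℂ) (z k) * v k).im

/-!
Write `ω(a, b) = ∑ₖ Im(conj aₖ · bₖ)`, an antisymmetric real bilinear form, so that
`α_ε(y) = H_ε(y)⁻¹ · ω(y, ·)`. By the product rule, for any differentiable `f` the form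
`f · ω(y, ·)` has `dα(X, v) = Df[X] · ω(z, v) − Df[v] · ω(z, X) + 2 f(z) · ω(X, v)`.
With the weights `w = (0, 0, ε₁, −ε₁, …, ε_m, −ε_m)`, `X(z)ₖ = i wₖ zₖ` generates the diagonal
rotation `zₖ ↦ e^{i wₖ t} zₖ`, which preserves every weighted norm `∑ₖ cₖ |zₖ|²`, in particular
`H_ε = ∑ₖ (1 + wₖ) |zₖ|²`; so `D(H_ε⁻¹)[X] = 0`. Moreover `Δ_ε = ∑ₖ wₖ |zₖ|²` is the Hamiltonian of
`X`: `ω(z, X) = Δ_ε(z)` and `2 ω(X, ·) = −DΔ_ε(z)`. Substituting leaves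
`−D(H_ε⁻¹)[v] · Δ_ε − H_ε⁻¹ · DΔ_ε[v]`.
-/

open ContinuousLinearMap

section ExteriorDerivative

variable {E : Type*} [NormedAddCommGroup E] [NormedSpace ℝ E]

theorem fderiv_mul_form_sub_swap_eq_neg_fderiv_mul {f g : E → ℝ} {ω : E →L[ℝ] E →L[ℝ] ℝ}
    {z X v : E} (hf : DifferentiableAt ℝ f z) (hg : DifferentiableAt ℝ g z)
    (hω : ∀ a b, ω a b = -ω b a) (hfX : fderiv ℝ f z X = 0) (hgz : ω z X = g z)
    (hgv : fderiv ℝ g z v = -2 * ω X v) :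
    fderiv ℝ (fun y => f y * ω y v) z X - fderiv ℝ (fun y => f y * ω y X) z v
      = -fderiv ℝ (fun y => f y * g y) z v := by
  have hωd : ∀ u, HasFDerivAt (fun y => ω y u) (ω.flip u) z := fun u => (ω.flip u).hasFDerivAt
  rw [fderiv_fun_mul hf (hωd v).differentiableAt, fderiv_fun_mul hf (hωd X).differentiableAt,
    fderiv_fun_mul hf hg, (hωd v).fderiv, (hωd X).fderiv]
  simp only [add_apply, smul_apply, flip_apply, smul_eq_mul, hfX, hgz, hgv, hω v X]
  ring

end ExteriorDerivative

section DiagonalRotation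

variable {ι : Type*} [Fintype ι]

noncomputable def imConjMul : ℂ →L[ℝ] ℂ →L[ℝ] ℝ :=
  (compL ℝ ℂ ℂ ℝ imCLM).comp
    ((ContinuousLinearMap.mul ℝ ℂ).comp conjCLE.toContinuousLinearMap)

noncomputable def imForm : (ι → ℂ) →L[ℝ] (ι → ℂ) →L[ℝ] ℝ :=
  ∑ k, imConjMul.bilinearComp (proj k) (proj k)

@[simp]
theorem imForm_apply (a b : ι → ℂ) : imForm a b = ∑ k, (starRingEnd ℂ (a k) * b k).im := by
  simp [imForm, imConjMul]

noncomputable def weightedNormSq (c : ι → ℝ) (z : ι → ℂ) : ℝ := ∑ k, c k * ‖z k‖ ^ 2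

noncomputable def rotationField (w : ι → ℝ) (z : ι → ℂ) : ι → ℂ := fun k => I * w k * z k

theorem imForm_swap (a b : ι → ℂ) : imForm a b = -imForm b a := by
  simp only [imForm_apply, ← Finset.sum_neg_distrib, mul_im, conj_re, conj_im]
  exact Finset.sum_congr rfl fun k _ => by ring

theorem imForm_rotationField (w : ι → ℝ) (z : ι → ℂ) :
    imForm z (rotationField w z) = weightedNormSq w z := by
  simp only [imForm_apply, weightedNormSq, rotationField, Complex.sq_norm, normSq_apply, mul_im,
    mul_re, conj_re, conj_im, I_re, I_im, ofReal_re, ofReal_im]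
  exact Finset.sum_congr rfl fun k _ => by ring

theorem hasFDerivAt_weightedNormSq (c : ι → ℝ) (z : ι → ℂ) :
    HasFDerivAt (weightedNormSq c) (∑ k, c k • (2 • innerSL ℝ (z k)).comp (proj k)) z :=
  HasFDerivAt.fun_sum fun k _ => ((hasFDerivAt_apply k z).norm_sq).const_mul (c k)

theorem fderiv_weightedNormSq_apply (c : ι → ℝ) (z u : ι → ℂ) :
    fderiv ℝ (weightedNormSq c) z u = 2 * ∑ k, c k * (starRingEnd ℂ (z k) * u k).re := by
  rw [(hasFDerivAt_weightedNormSq c z).fderiv, Finset.mul_sum]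
  simp only [smul_comp, sum_apply, smul_apply, comp_apply, proj_apply, coe_innerSL_apply,
    Complex.inner, mul_re, conj_re, conj_im, nsmul_eq_mul, Nat.cast_ofNat, smul_eq_mul]
  exact Finset.sum_congr rfl fun k _ => by ring

theorem fderiv_weightedNormSq_rotationField (c w : ι → ℝ) (z : ι → ℂ) :
    fderiv ℝ (weightedNormSq c) z (rotationField w z) = 0 := by
  simp only [fderiv_weightedNormSq_apply, rotationField, mul_re, mul_im, conj_re, conj_im, I_re,
    I_im, ofReal_re, ofReal_im]
  exact mul_eq_zero_of_right _ (Finset.sum_eq_zero fun k _ => by ring)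

theorem fderiv_weightedNormSq_eq_imForm (w : ι → ℝ) (z v : ι → ℂ) :
    fderiv ℝ (weightedNormSq w) z v = -2 * imForm (rotationField w z) v := by
  simp only [fderiv_weightedNormSq_apply, imForm_apply, rotationField, Finset.mul_sum, map_mul,
    conj_I, conj_ofReal, mul_re, mul_im, conj_re, conj_im, neg_re, neg_im, I_re, I_im, ofReal_re,
    ofReal_im]
  exact Finset.sum_congr rfl fun k _ => by ring

end DiagonalRotation

section Coordinates

variable (m : ℕ)

theorem sum_eq_sum_idxA_add_idxB {M : Type*} [AddCommMonoid M] (f : Fin (2 * m + 2) → M)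
    (h0 : f 0 = 0) (h1 : f 1 = 0) : ∑ k, f k = ∑ j, (f (idxA m j) + f (idxB m j)) := by
  let e : Fin (m + 1) × Fin 2 ≃ Fin (2 * m + 2) := finProdFinEquiv.trans (finCongr (by ring))
  have h00 : e (0, 0) = 0 := Fin.ext (by simp [e])
  have h01 : e (0, 1) = 1 := Fin.ext (by simp [e])
  have hA : ∀ j, e (j.succ, 0) = idxA m j := fun j => Fin.ext (by simp [e, idxA]; ring)
  have hB : ∀ j, e (j.succ, 1) = idxB m j := fun j => Fin.ext (by simp [e, idxB]; ring)
  rw [← e.sum_comp, Fintype.sum_prod_type, Fin.sum_univ_succ]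
  simp only [Fin.sum_univ_two, h00, h01, hA, hB, h0, h1, zero_add]

noncomputable def epsWeight (ε : Fin m → ℝ) (k : Fin (2 * m + 2)) : ℝ :=
  if h : k.val ≤ 1 then 0
  else if k.val % 2 = 0 then ε ⟨k.val / 2 - 1, by have := k.isLt; omega⟩
  else -ε ⟨k.val / 2 - 1, by have := k.isLt; omega⟩

theorem epsWeight_idxA (ε : Fin m → ℝ) (j : Fin m) : epsWeight m ε (idxA m j) = ε j := by
  have h : (idxA m j : ℕ) = 2 * j + 2 := rfl
  rw [epsWeight, dif_neg (by omega), if_pos (by omega)]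
  exact congrArg ε (Fin.ext (by simp only [h]; omega))

theorem epsWeight_idxB (ε : Fin m → ℝ) (j : Fin m) : epsWeight m ε (idxB m j) = -ε j := by
  have h : (idxB m j : ℕ) = 2 * j + 3 := rfl
  rw [epsWeight, dif_neg (by omega), if_neg (by omega)]
  exact congrArg (-ε ·) (Fin.ext (by simp only [h]; omega))

theorem Xvf_eq_rotationField (ε : Fin m → ℝ) : Xvf m ε = rotationField (epsWeight m ε) := by
  ext z k
  unfold Xvf rotationField epsWeight
  split_ifs <;> simp

theorem DeltaEps_eq_weightedNormSq (ε : Fin m → ℝ) :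
    DeltaEps m ε = weightedNormSq (epsWeight m ε) := by
  ext z
  rw [weightedNormSq, sum_eq_sum_idxA_add_idxB m _ (by simp [epsWeight]) (by simp [epsWeight])]
  simp only [DeltaEps, epsWeight_idxA, epsWeight_idxB]
  exact Finset.sum_congr rfl fun j _ => by ring

theorem HepsN_eq_weightedNormSq (ε : Fin m → ℝ) :
    HepsN m ε = weightedNormSq (1 + epsWeight m ε) := by
  ext z
  simp only [HepsN, DeltaEps_eq_weightedNormSq, weightedNormSq, ← Finset.sum_add_distrib]
  exact Finset.sum_congr rfl fun k _ => by simp only [Pi.add_apply, Pi.one_apply]; ring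

theorem alphaN_eq_inv_mul_imForm (ε : Fin m → ℝ) :
    alphaN m ε = fun y v => (HepsN m ε y)⁻¹ * imForm y v := by
  ext y v
  simp [alphaN]

end Coordinates

theorem contraction_exterior_derivative_alphaN_general (m : ℕ) (ε : Fin m → ℝ)
    (z : Fin (2 * m + 2) → ℂ) (hz : HepsN m ε z ≠ 0) (v : Fin (2 * m + 2) → ℂ) :
    fderiv ℝ (fun y => alphaN m ε y v) z (Xvf m ε z)
        - fderiv ℝ (fun y => alphaN m ε y (Xvf m ε z)) z v
      = -(fderiv ℝ (fun y => (HepsN m ε y)⁻¹ * DeltaEps m ε y) z v) := by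
  rw [HepsN_eq_weightedNormSq] at hz
  simp only [alphaN_eq_inv_mul_imForm, HepsN_eq_weightedNormSq, DeltaEps_eq_weightedNormSq,
    Xvf_eq_rotationField]
  set w := epsWeight m ε
  have hH := hasFDerivAt_weightedNormSq (1 + w) z
  have hinvX : fderiv ℝ (fun y => (weightedNormSq (1 + w) y)⁻¹) z (rotationField w z) = 0 := by
    have hinv : HasFDerivAt (fun y => (weightedNormSq (1 + w) y)⁻¹) _ z :=
      (hasFDerivAt_inv hz).comp z hH
    rw [hinv.fderiv, comp_apply, ← hH.fderiv, fderiv_weightedNormSq_rotationField, map_zero]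
  exact fderiv_mul_form_sub_swap_eq_neg_fderiv_mul (hH.differentiableAt.inv hz)
    (hasFDerivAt_weightedNormSq w z).differentiableAt imForm_swap hinvX
    (imForm_rotationField w z) (fderiv_weightedNormSq_eq_imForm w z v)

/-- For every `z` with `H_ε(z) ≠ 0` and every `v`:
`(Dα_ε(z)[X(z)])(v) − (Dα_ε(z)[v])(X(z)) = −D(H_ε⁻¹·Δ_ε)(z)(v)`, i.e. the contraction of the
exterior derivative of `α_ε` with `X` equals minus the differential of `H_ε⁻¹·Δ_ε`. -/
theorem contraction_exterior_derivative_alphaN (m : ℕ) (hm : 1 ≤ m) (ε : Fin m → ℝ)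
    (z : Fin (2 * m + 2) → ℂ) (hz : HepsN m ε z ≠ 0) (v : Fin (2 * m + 2) → ℂ) :
    fderiv ℝ (fun y => alphaN m ε y v) z (Xvf m ε z)
        - fderiv ℝ (fun y => alphaN m ε y (Xvf m ε z)) z v
      = -(fderiv ℝ (fun y => (HepsN m ε y)⁻¹ * DeltaEps m ε y) z v) :=
  contraction_exterior_derivative_alphaN_general m ε z hz v
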